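/- For x, y > 0, AG(x,y) ≤ L_{3/2}(x,y), where L_{3/2}(x,y) = L(x^{3/2}, y^{3/2})^{2/3}. -/

import Mathlib

noncomputable def agmSeq (x y : ℝ) : ℕ → ℝ × ℝ
  | 0 => (x, y)
  | n+1 => (((agmSeq x y n).1 + (agmSeq x y n).2)/2,
      Real.sqrt ((agmSeq x y n).1 * (agmSeq x y n).2))

noncomputable def AG (x y : ℝ) : ℝ :=
  Filter.limUnder Filter.atTop fun n => (agmSeq x y n).1

noncomputable def Lmean (x y : ℝ) : ℝ :=
  if x = y then x else (x - y) / Real.log (x / y)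

/-!
One AGM step `(a, b) ↦ ((a + b) / 2, √(a b))` does not increase `L_{3/2}`, and
`L_{3/2}(a, b) ≥ min a b`. Along the AGM iteration `L_{3/2}` therefore stays below its initial
value and above the geometric means, which converge to `AG x y`.

Writing `a = p⁴`, `b = q⁴` and scaling by `(p q)³`, the step inequality becomes
`L(w³, 1) ≤ L(t³, t⁻³)` for `t = p / q > 1` and `w² = (t² + t⁻²) / 2`, i.e.
`2 t³ log t (w³ - 1) ≤ log w (t⁶ - 1)`. For `t ≤ 4` this follows from Lin's bound
`L(τ³, 1) ≤ ((τ + 1) / 2)³` at `τ = w` and Lobatto's upper bound for `log t`, which leave a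
polynomial inequality; for `t ≥ 4` from `w⁴ ≥ t³` and `8 (t w)³ ≤ 3 (t⁶ - 1)`.
-/

open Real Set Filter Topology
open scoped NNReal

lemma Lmean_of_ne {x y : ℝ} (h : x ≠ y) : Lmean x y = (x - y) / log (x / y) := if_neg h

lemma Lmean_comm (x y : ℝ) : Lmean x y = Lmean y x := by
  rcases eq_or_ne x y with rfl | h
  · rfl
  rw [Lmean_of_ne h, Lmean_of_ne h.symm, ← inv_div x y, log_inv, div_neg, ← neg_div, neg_sub]

lemma Lmean_mul_mul {k : ℝ} (hk : k ≠ 0) (x y : ℝ) :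
    Lmean (k * x) (k * y) = k * Lmean x y := by
  rcases eq_or_ne x y with rfl | h
  · simp [Lmean]
  rw [Lmean_of_ne h, Lmean_of_ne (mul_right_injective₀ hk |>.ne h), mul_div_mul_left _ _ hk,
    ← mul_sub, mul_div_assoc]

lemma le_Lmean {x y : ℝ} (hy : 0 < y) (hyx : y ≤ x) : y ≤ Lmean x y := by
  rcases hyx.eq_or_lt with rfl | h
  · simp [Lmean]
  rw [Lmean_of_ne h.ne', le_div_iff₀ (log_pos ((one_lt_div hy).mpr h))]
  have := log_le_sub_one_of_pos (div_pos (hy.trans h) hy)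
  calc y * log (x / y) ≤ y * (x / y - 1) := by gcongr
    _ = x - y := by field_simp

lemma Lmean_pos {x y : ℝ} (hx : 0 < x) (hy : 0 < y) : 0 < Lmean x y := by
  rcases le_total y x with h | h
  · exact hy.trans_le (le_Lmean hy h)
  · exact hx.trans_le (Lmean_comm x y ▸ le_Lmean hx h)

lemma le_of_hasDerivAt_le {f g f' g' : ℝ → ℝ} {a b : ℝ} (hab : a ≤ b)
    (hf : ∀ x ∈ Icc a b, HasDerivAt f (f' x) x) (hg : ∀ x ∈ Icc a b, HasDerivAt g (g' x) x)
    (ha : f a ≤ g a) (h' : ∀ x ∈ Icc a b, f' x ≤ g' x) : f b ≤ g b :=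
  image_le_of_deriv_right_le_deriv_boundary
    (fun x hx => (hf x hx).continuousAt.continuousWithinAt)
    (fun x hx => (hf x (Ico_subset_Icc_self hx)).hasDerivWithinAt) ha
    (fun x hx => (hg x hx).continuousAt.continuousWithinAt)
    (fun x hx => (hg x (Ico_subset_Icc_self hx)).hasDerivWithinAt)
    (fun x hx => h' x (Ico_subset_Icc_self hx)) (right_mem_Icc.mpr hab)

/-- Lin's inequality `L(τ³, 1) ≤ ((τ + 1) / 2)³`. -/
lemma le_log_lin {τ : ℝ} (hτ : 1 ≤ τ) :
    8 * (τ ^ 3 - 1) / (3 * (τ + 1) ^ 3) ≤ log τ := by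
  refine le_of_hasDerivAt_le (f := fun x => 8 * (x ^ 3 - 1) / (3 * (x + 1) ^ 3))
    (f' := fun x => x⁻¹ - (x - 1) ^ 4 / (x * (x + 1) ^ 4)) hτ (fun x hx => ?_)
    (fun x hx => hasDerivAt_log (by linarith [hx.1])) (by norm_num) (fun x hx => ?_)
  · have hx0 : 0 < x := by linarith [hx.1]
    have hq : 3 * (x + 1) ^ 3 ≠ 0 := by positivity
    refine HasDerivAt.congr_deriv
      ((((hasDerivAt_id' x).fun_pow 3).sub_const 1 |>.const_mul 8).fun_div
        (((hasDerivAt_id' x).add_const 1).fun_pow 3 |>.const_mul 3) hq) ?_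
    field_simp
    ring
  · have hx0 : 0 < x := by linarith [hx.1]
    simp only [sub_le_self_iff]
    positivity

/-- Four-point Gauss–Lobatto rule for `∫₁ᵗ dx / x`, an overestimate as `(1 / x)⁽⁶⁾ > 0`. -/
lemma log_le_lobatto {t : ℝ} (ht : 1 ≤ t) :
    log t ≤ (t ^ 2 - 1) * (t ^ 2 + 28 * t + 1) / (12 * t * (t ^ 2 + 3 * t + 1)) := by
  refine le_of_hasDerivAt_le
    (g := fun x => (x ^ 2 - 1) * (x ^ 2 + 28 * x + 1) / (12 * x * (x ^ 2 + 3 * x + 1)))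
    (g' := fun x => x⁻¹ + (x - 1) ^ 6 / (12 * x ^ 2 * (x ^ 2 + 3 * x + 1) ^ 2)) ht
    (fun x hx => hasDerivAt_log (by linarith [hx.1])) (fun x hx => ?_) (by norm_num)
    (fun x hx => ?_)
  · have hx0 : 0 < x := by linarith [hx.1]
    have hq : 12 * x * (x ^ 2 + 3 * x + 1) ≠ 0 := by positivity
    have hd := fun c : ℝ => (((hasDerivAt_id' x).fun_pow 2).fun_add
      ((hasDerivAt_id' x).const_mul c)).add_const 1
    refine HasDerivAt.congr_deriv
      (((((hasDerivAt_id' x).fun_pow 2).sub_const 1).fun_mul (hd 28)).fun_div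
        (((hasDerivAt_id' x).const_mul 12).fun_mul (hd 3)) hq) ?_
    field_simp
    ring
  · have hx0 : 0 < x := by linarith [hx.1]
    simp only [le_add_iff_nonneg_right]
    positivity

lemma one_lt_of_two_mul_sq_mul_sq_eq {t w : ℝ} (ht : 1 < t) (hw : 0 ≤ w)
    (hw2 : 2 * t ^ 2 * w ^ 2 = t ^ 4 + 1) : 1 < w := by
  have h : 2 * t ^ 2 * (w ^ 2 - 1) = (t ^ 2 - 1) ^ 2 := by linear_combination hw2
  have : 0 < w ^ 2 - 1 :=
    (mul_pos_iff_of_pos_left (by positivity)).mp (h ▸ pow_pos (by nlinarith) 2)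
  nlinarith

/-- Modulo `2 t² w² = t⁴ + 1` the left side is linear in `w`; the resulting bound `S w ≤ R` is
checked by squaring. -/
lemma poly_ineq_of_le_four {t w : ℝ} (ht1 : 1 ≤ t) (ht4 : t ≤ 4) (hw : 0 ≤ w)
    (hw2 : 2 * t ^ 2 * w ^ 2 = t ^ 4 + 1) :
    t ^ 2 * (t ^ 2 + 28 * t + 1) * (w + 1) ^ 3
      ≤ 16 * (t ^ 2 + 3 * t + 1) * (t ^ 4 + t ^ 2 + 1) := by
  have hpow := fun k : ℕ => pow_nonneg (zero_le_one.trans ht1) k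
  set S := (t ^ 2 + 28 * t + 1) * (t ^ 4 + 6 * t ^ 2 + 1)
  set R := 32 * (t ^ 2 + 3 * t + 1) * (t ^ 4 + t ^ 2 + 1)
    - (t ^ 2 + 28 * t + 1) * (3 * t ^ 4 + 2 * t ^ 2 + 3)
  set Q := -1 - 60 * t + 650 * t ^ 2 + 3620 * t ^ 3 + 8001 * t ^ 4 + 17560 * t ^ 5
    + 21100 * t ^ 6 + 17560 * t ^ 7 + 8001 * t ^ 8 + 3620 * t ^ 9 + 650 * t ^ 10
    - 60 * t ^ 11 - t ^ 12
  have hlin : 2 * t ^ 2 * (w + 1) ^ 3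
      = (t ^ 4 + 6 * t ^ 2 + 1) * w + (3 * t ^ 4 + 2 * t ^ 2 + 3) := by
    linear_combination (w + 3) * hw2
  have hQ : 0 ≤ Q := by
    have h1 : 0 ≤ 650 * t ^ 2 - 60 * t - 1 := by nlinarith
    have h2 : 0 ≤ t ^ 10 * (650 - 60 * t - t ^ 2) := by
      have : 0 ≤ 650 - 60 * t - t ^ 2 := by nlinarith
      positivity
    nlinarith [hpow 3, hpow 4, hpow 5, hpow 6, hpow 7, hpow 8, hpow 9]
  have hR : 0 ≤ R := by nlinarith [hpow 1, hpow 2, hpow 3, hpow 4, hpow 5, hpow 6]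
  have hSwR : S * w ≤ R := by
    have hid : R ^ 2 * (2 * t ^ 2) - (S * w) ^ 2 * (2 * t ^ 2) = (t - 1) ^ 4 * Q := by
      linear_combination (-S ^ 2) * hw2
    have hsq : (S * w) ^ 2 * (2 * t ^ 2) ≤ R ^ 2 * (2 * t ^ 2) := by
      nlinarith [mul_nonneg (pow_nonneg (sub_nonneg.mpr ht1) 4) hQ]
    exact (pow_le_pow_iff_left₀ (by positivity) hR two_ne_zero).mp
      (le_of_mul_le_mul_right hsq (by positivity))
  nlinarith

lemma agm_step_ineq_of_le_four {t w : ℝ} (ht : 1 < t) (ht4 : t ≤ 4) (hw : 0 ≤ w)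
    (hw2 : 2 * t ^ 2 * w ^ 2 = t ^ 4 + 1) :
    2 * t ^ 3 * log t * (w ^ 3 - 1) ≤ log w * (t ^ 6 - 1) := by
  have ht1 := ht.le
  have hw1 := (one_lt_of_two_mul_sq_mul_sq_eq ht hw hw2).le
  have hlogt : 0 ≤ log t := log_nonneg ht1
  have hlogw : 0 ≤ log w := log_nonneg hw1
  have hlin : 8 * (w ^ 3 - 1) ≤ 3 * (w + 1) ^ 3 * log w := by
    have := le_log_lin hw1
    rwa [div_le_iff₀ (by positivity), mul_comm (log w)] at this
  have hlob : 12 * t * (t ^ 2 + 3 * t + 1) * log t ≤ (t ^ 2 - 1) * (t ^ 2 + 28 * t + 1) := by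
    have := log_le_lobatto ht1
    rwa [le_div_iff₀ (by positivity), mul_comm] at this
  have hpoly := poly_ineq_of_le_four ht1 ht4 hw hw2
  have hlogt_bound : 3 * t ^ 3 * (w + 1) ^ 3 * log t ≤ 4 * (t ^ 6 - 1) := by
    refine le_of_mul_le_mul_right ?_ (by positivity : (0:ℝ) < 4 * (t ^ 2 + 3 * t + 1))
    have ht2 : 0 ≤ t ^ 2 - 1 := by nlinarith
    calc 3 * t ^ 3 * (w + 1) ^ 3 * log t * (4 * (t ^ 2 + 3 * t + 1))
        = t ^ 2 * (w + 1) ^ 3 * (12 * t * (t ^ 2 + 3 * t + 1) * log t) := by ring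
      _ ≤ t ^ 2 * (w + 1) ^ 3 * ((t ^ 2 - 1) * (t ^ 2 + 28 * t + 1)) := by gcongr
      _ = (t ^ 2 - 1) * (t ^ 2 * (t ^ 2 + 28 * t + 1) * (w + 1) ^ 3) := by ring
      _ ≤ (t ^ 2 - 1) * (16 * (t ^ 2 + 3 * t + 1) * (t ^ 4 + t ^ 2 + 1)) := by gcongr
      _ = 4 * (t ^ 6 - 1) * (4 * (t ^ 2 + 3 * t + 1)) := by ring
  calc 2 * t ^ 3 * log t * (w ^ 3 - 1)
      ≤ 2 * t ^ 3 * log t * (3 * (w + 1) ^ 3 * log w / 8) := by gcongr; linarith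
    _ = log w * (3 * t ^ 3 * (w + 1) ^ 3 * log t) / 4 := by ring
    _ ≤ log w * (t ^ 6 - 1) := by nlinarith

lemma agm_step_ineq_of_four_le {t w : ℝ} (ht4 : 4 ≤ t) (hw : 0 ≤ w)
    (hw2 : 2 * t ^ 2 * w ^ 2 = t ^ 4 + 1) :
    2 * t ^ 3 * log t * (w ^ 3 - 1) ≤ log w * (t ^ 6 - 1) := by
  have ht0 : 0 < t := by linarith
  have hlogt : 0 ≤ log t := log_nonneg (by linarith)
  have hw4 : t ^ 3 ≤ w ^ 4 := by
    have h : 4 * t ^ 4 * w ^ 4 = (t ^ 4 + 1) ^ 2 := by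
      linear_combination (2 * t ^ 2 * w ^ 2 + t ^ 4 + 1) * hw2
    have : 4 * t ^ 7 ≤ t ^ 8 := by nlinarith [pow_pos ht0 7]
    nlinarith [pow_pos ht0 4]
  have hlog : 3 * log t ≤ 4 * log w := by
    have := log_le_log (by positivity) hw4
    rw [log_pow, log_pow] at this
    exact_mod_cast this
  have ht6 : 0 ≤ t ^ 6 - 1 := by nlinarith [one_le_pow₀ (n := 6) (by linarith : (1:ℝ) ≤ t)]
  have hcube : 8 * t ^ 3 * w ^ 3 ≤ 3 * (t ^ 6 - 1) := by
    have h : 64 * (t * w) ^ 6 = 8 * (t ^ 4 + 1) ^ 3 := by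
      linear_combination
        8 * ((2 * t ^ 2 * w ^ 2) ^ 2 + 2 * t ^ 2 * w ^ 2 * (t ^ 4 + 1) + (t ^ 4 + 1) ^ 2) * hw2
    have ht2 : 16 ≤ t ^ 2 := by nlinarith
    have hsq : (8 * t ^ 3 * w ^ 3) ^ 2 ≤ (3 * (t ^ 6 - 1)) ^ 2 := by
      nlinarith [pow_le_pow_left₀ (by norm_num) ht2 2, pow_le_pow_left₀ (by norm_num) ht2 3,
        pow_le_pow_left₀ (by norm_num) ht2 4]
    exact (pow_le_pow_iff_left₀ (by positivity) (by linarith) two_ne_zero).mp hsq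
  calc 2 * t ^ 3 * log t * (w ^ 3 - 1) ≤ 2 * t ^ 3 * w ^ 3 * log t := by
        nlinarith [mul_nonneg (pow_nonneg ht0.le 3) hlogt]
    _ ≤ 3 / 4 * (t ^ 6 - 1) * log t := mul_le_mul_of_nonneg_right (by linarith) hlogt
    _ ≤ log w * (t ^ 6 - 1) := by nlinarith

lemma agm_step_ineq {t w : ℝ} (ht : 1 < t) (hw : 0 ≤ w)
    (hw2 : 2 * t ^ 2 * w ^ 2 = t ^ 4 + 1) :
    2 * t ^ 3 * log t * (w ^ 3 - 1) ≤ log w * (t ^ 6 - 1) := by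
  rcases le_total t 4 with ht4 | ht4
  · exact agm_step_ineq_of_le_four ht ht4 hw hw2
  · exact agm_step_ineq_of_four_le ht4 hw hw2

lemma Lmean_cube_le {t w : ℝ} (ht : 1 < t) (hw : 0 ≤ w)
    (hw2 : 2 * t ^ 2 * w ^ 2 = t ^ 4 + 1) : Lmean (w ^ 3) 1 ≤ Lmean (t ^ 3) (t ^ 3)⁻¹ := by
  have ht0 : 0 < t := by linarith
  have hw1 := one_lt_of_two_mul_sq_mul_sq_eq ht hw hw2
  have hw3 : 1 < w ^ 3 := one_lt_pow₀ hw1 (by norm_num)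
  have ht3 : 1 < t ^ 3 := one_lt_pow₀ ht (by norm_num)
  have hlogt : 0 < log t := log_pos ht
  have hlogw : 0 < log w := log_pos hw1
  have hne : t ^ 3 ≠ (t ^ 3)⁻¹ := (inv_lt_one_of_one_lt₀ ht3).trans ht3 |>.ne'
  rw [Lmean_of_ne hw3.ne', Lmean_of_ne hne, div_one, div_inv_eq_mul, ← pow_add, log_pow,
    log_pow, div_le_div_iff₀ (by positivity) (by positivity)]
  have hdiff : t ^ 3 - (t ^ 3)⁻¹ = (t ^ 6 - 1) / t ^ 3 := by field_simp
  rw [hdiff, div_mul_eq_mul_div, le_div_iff₀ (by positivity)]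
  push_cast
  linarith [agm_step_ineq ht hw hw2]

lemma Lmean_agm_step_of_lt {p q m : ℝ} (hq : 0 < q) (hqp : q < p) (hm : 0 ≤ m)
    (hm2 : 2 * m ^ 2 = p ^ 4 + q ^ 4) : Lmean (m ^ 3) ((p * q) ^ 3) ≤ Lmean (p ^ 6) (q ^ 6) := by
  have hp : 0 < p := hq.trans hqp
  have hk : (p * q) ^ 3 ≠ 0 := by positivity
  have ht : 1 < p / q := (one_lt_div hq).mpr hqp
  have hw2 : 2 * (p / q) ^ 2 * (m / (p * q)) ^ 2 = (p / q) ^ 4 + 1 := by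
    field_simp
    linear_combination hm2
  calc Lmean (m ^ 3) ((p * q) ^ 3)
      = Lmean ((p * q) ^ 3 * (m / (p * q)) ^ 3) ((p * q) ^ 3 * 1) := by
        congr 1 <;> field_simp
    _ = (p * q) ^ 3 * Lmean ((m / (p * q)) ^ 3) 1 := Lmean_mul_mul hk _ _
    _ ≤ (p * q) ^ 3 * Lmean ((p / q) ^ 3) ((p / q) ^ 3)⁻¹ := by
        gcongr
        exact Lmean_cube_le ht (by positivity) hw2
    _ = Lmean ((p * q) ^ 3 * (p / q) ^ 3) ((p * q) ^ 3 * ((p / q) ^ 3)⁻¹) :=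
        (Lmean_mul_mul hk _ _).symm
    _ = Lmean (p ^ 6) (q ^ 6) := by
        congr 1 <;> field_simp

lemma Lmean_agm_step {p q m : ℝ} (hp : 0 < p) (hq : 0 < q) (hm : 0 ≤ m)
    (hm2 : 2 * m ^ 2 = p ^ 4 + q ^ 4) : Lmean (m ^ 3) ((p * q) ^ 3) ≤ Lmean (p ^ 6) (q ^ 6) := by
  rcases lt_trichotomy q p with hqp | rfl | hpq
  · exact Lmean_agm_step_of_lt hq hqp hm hm2
  · have : m = q ^ 2 := by nlinarith [sq_nonneg (m - q ^ 2), sq_nonneg (m + q ^ 2)]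
    exact (congr_arg₂ Lmean (by rw [this]; ring) (by ring)).le
  · rw [mul_comm, Lmean_comm (p ^ 6)]
    exact Lmean_agm_step_of_lt hp hpq hm (by linarith)

lemma Lmean_rpow_agm_step {a b : ℝ} (ha : 0 < a) (hb : 0 < b) :
    Lmean (((a + b) / 2) ^ ((3 : ℝ) / 2)) (√(a * b) ^ ((3 : ℝ) / 2))
      ≤ Lmean (a ^ ((3 : ℝ) / 2)) (b ^ ((3 : ℝ) / 2)) := by
  have hA : 0 ≤ (a + b) / 2 := by positivity
  have key := Lmean_agm_step (p := a ^ (4⁻¹ : ℝ)) (q := b ^ (4⁻¹ : ℝ))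
    (m := √((a + b) / 2)) (by positivity) (by positivity) (sqrt_nonneg _) (by
      rw [sq_sqrt hA, ← rpow_mul_natCast ha.le, ← rpow_mul_natCast hb.le]
      norm_num
      ring)
  have hab : 0 ≤ a * b := by positivity
  rw [← mul_rpow ha.le hb.le, sqrt_eq_rpow, ← rpow_mul_natCast hA, ← rpow_mul_natCast hab,
    ← rpow_mul_natCast ha.le, ← rpow_mul_natCast hb.le] at key
  rw [sqrt_eq_rpow, ← rpow_mul hab]
  norm_num at key ⊢
  exact key

/-- `NNReal.agmSequences` lists (geometric, arithmetic) means and starts after the first step. -/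
lemma agmSeq_succ_eq_agmSequences (x y : ℝ≥0) (n : ℕ) :
    agmSeq x y (n + 1)
      = (((NNReal.agmSequences x y n).2 : ℝ), ((NNReal.agmSequences x y n).1 : ℝ)) := by
  induction n with
  | zero => simp [agmSeq]
  | succ n ih =>
    rw [agmSeq.eq_2, ih, NNReal.agmSequences_succ']
    simp [add_comm, mul_comm]

lemma AG_coe_eq_agm (x y : ℝ≥0) : AG x y = NNReal.agm x y := by
  refine Tendsto.limUnder_eq ((tendsto_add_atTop_iff_nat 1).mp ?_)
  simp_rw [agmSeq_succ_eq_agmSequences]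
  exact NNReal.tendsto_coe.mpr NNReal.tendsto_agmSequences_snd_agm

lemma agmSeq_pos {x y : ℝ} (hx : 0 < x) (hy : 0 < y) (n : ℕ) :
    0 < (agmSeq x y n).1 ∧ 0 < (agmSeq x y n).2 := by
  induction n with
  | zero => exact ⟨hx, hy⟩
  | succ n ih => exact ⟨by simp only [agmSeq]; linarith [ih.1, ih.2],
      sqrt_pos.mpr (mul_pos ih.1 ih.2)⟩

theorem AG_le_of_agm_step_le {M : ℝ → ℝ → ℝ}
    (hle : ∀ a b, 0 < b → b ≤ a → b ≤ M a b)
    (hstep : ∀ a b, 0 < a → 0 < b → M ((a + b) / 2) √(a * b) ≤ M a b)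
    {x y : ℝ} (hx : 0 < x) (hy : 0 < y) : AG x y ≤ M x y := by
  have hM : ∀ n, M (agmSeq x y n).1 (agmSeq x y n).2 ≤ M x y := by
    intro n
    induction n with
    | zero => rfl
    | succ n ih => exact (hstep _ _ (agmSeq_pos hx hy n).1 (agmSeq_pos hx hy n).2).trans ih
  lift x to ℝ≥0 using hx.le
  lift y to ℝ≥0 using hy.le
  have hG : Tendsto (fun n => (agmSeq x y (n + 1)).2) atTop (𝓝 (AG x y)) := by
    simp_rw [agmSeq_succ_eq_agmSequences, AG_coe_eq_agm]
    exact NNReal.tendsto_coe.mpr NNReal.tendsto_agmSequences_fst_agm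
  refine le_of_tendsto' hG fun n => (hle _ _ (agmSeq_pos hx hy _).2 ?_).trans (hM (n + 1))
  rw [agmSeq_succ_eq_agmSequences]
  exact NNReal.coe_le_coe.mpr (NNReal.agmSequences_fst_le_snd n n)

theorem agm_le_L32 (x y : ℝ) (hx : 0 < x) (hy : 0 < y) :
    AG x y ≤ (Lmean (x ^ ((3:ℝ)/2)) (y ^ ((3:ℝ)/2))) ^ ((2:ℝ)/3) := by
  refine AG_le_of_agm_step_le
    (M := fun a b => Lmean (a ^ ((3:ℝ)/2)) (b ^ ((3:ℝ)/2)) ^ ((2:ℝ)/3))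
    (fun a b hb hba => ?_) (fun a b ha hb => ?_) hx hy
  · calc b = (b ^ ((3:ℝ)/2)) ^ ((2:ℝ)/3) := by rw [← rpow_mul hb.le]; norm_num
      _ ≤ Lmean (a ^ ((3:ℝ)/2)) (b ^ ((3:ℝ)/2)) ^ ((2:ℝ)/3) := by
        gcongr
        exact le_Lmean (by positivity) (by gcongr)
  · exact rpow_le_rpow (Lmean_pos (by positivity) (by positivity)).le
      (Lmean_rpow_agm_step ha hb) (by norm_num)
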